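/- arXiv:1203.2070 — 2 statements merged into one kernel-verified Lean document; each statement's English description precedes it below -/
import Mathlib

section
/- For all ρ > 0, μ > 0 and every p ∈ ℝ^m it holds: f(x_{ρ,p}) + g(x_{μ,p}) − v(P) ≤ |⟨p, A x_{ρ,p} − x_{μ,p}⟩| + |θ(p) + v(D)| + 2ρ D_f + 2μ D_g. -/
open scoped RealInnerProductSpace
noncomputable section

/-- `Euc k` is the Euclidean space `ℝ^k`. -/
abbrev Euc (k : ℕ) := EuclideanSpace ℝ (Fin k)

/-- `f` is proper: nowhere `-∞` and somewhere finite. -/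
def IsProperFn {k : ℕ} (f : Euc k → EReal) : Prop :=
  (∀ x, f x ≠ ⊥) ∧ ∃ x, f x ≠ ⊤

/-- Convexity of an extended-real-valued function. -/
def IsConvexFn {k : ℕ} (f : Euc k → EReal) : Prop :=
  ∀ x y : Euc k, ∀ t : ℝ, 0 < t → t < 1 →
    f (t • x + (1 - t) • y) ≤ (t : EReal) * f x + ((1 - t : ℝ) : EReal) * f y

/-- `f` is proper, convex, lower semicontinuous with bounded effective domain. -/
def NiceFn {k : ℕ} (f : Euc k → EReal) : Prop :=
  IsProperFn f ∧ IsConvexFn f ∧ LowerSemicontinuous f ∧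
    Bornology.IsBounded {x | f x ≠ ⊤}

/-- The Fenchel conjugate `f*(q) = sup_x {⟨q,x⟩ - f(x)}` (real-valued). -/
noncomputable def conjFn {k : ℕ} (f : Euc k → EReal) (q : Euc k) : ℝ :=
  (⨆ x, ((⟪q, x⟫ : ℝ) : EReal) - f x).toReal

/-- The Fenchel conjugate as an extended real. -/
noncomputable def conjE {k : ℕ} (f : Euc k → EReal) (q : Euc k) : EReal :=
  ⨆ x, ((⟪q, x⟫ : ℝ) : EReal) - f x

/-- The smoothed conjugate `f_r*(q) = sup_x {⟨q,x⟩ - f(x) - (r/2)‖x‖²}`. -/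
noncomputable def conjSm {k : ℕ} (f : Euc k → EReal) (r : ℝ) (q : Euc k) : ℝ :=
  (⨆ x, ((⟪q, x⟫ - r / 2 * ‖x‖ ^ 2 : ℝ) : EReal) - f x).toReal

/-- The proximal objective `x ↦ f(x) + (r/2)‖u - x‖²`. -/
noncomputable def proxObj {k : ℕ} (f : Euc k → EReal) (r : ℝ) (u x : Euc k) : EReal :=
  f x + ((r / 2 * ‖u - x‖ ^ 2 : ℝ) : EReal)

/-- `D_f = sup {‖x‖²/2 : x ∈ dom f}`. -/
noncomputable def Dsup {k : ℕ} (f : Euc k → EReal) : ℝ :=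
  sSup ((fun x : Euc k => ‖x‖ ^ 2 / 2) '' {x | f x ≠ ⊤})

/-- `x0` is the unique global minimizer of `h`. -/
def UniqMin {α : Type*} {β : Type*} [Preorder β] (h : α → β) (x0 : α) : Prop :=
  (∀ x, h x0 ≤ h x) ∧ ∀ x, (∀ y, h x ≤ h y) → x = x0

/-- The dual objective `θ(p) = f*(A*p) + g*(-p)`. -/
noncomputable def theta {n m : ℕ} (f : Euc n → EReal) (g : Euc m → EReal)
    (A : Euc n →L[ℝ] Euc m) (p : Euc m) : ℝ :=
  conjFn f (ContinuousLinearMap.adjoint A p) + conjFn g (-p)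

/-- The singly smoothed dual objective `θ_{ρ,μ}(p) = f_ρ*(A*p) + g_μ*(-p)`. -/
noncomputable def thetaSm {n m : ℕ} (f : Euc n → EReal) (g : Euc m → EReal)
    (A : Euc n →L[ℝ] Euc m) (r s : ℝ) (p : Euc m) : ℝ :=
  conjSm f r (ContinuousLinearMap.adjoint A p) + conjSm g s (-p)

/-- The doubly smoothed dual objective `θ_{ρ,μ,κ}(p) = θ_{ρ,μ}(p) + (κ/2)‖p‖²`. -/
noncomputable def thetaSmK {n m : ℕ} (f : Euc n → EReal) (g : Euc m → EReal)
    (A : Euc n →L[ℝ] Euc m) (r s c : ℝ) (p : Euc m) : ℝ :=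
  thetaSm f g A r s p + c / 2 * ‖p‖ ^ 2

/-- The optimal value of the primal problem `v(P) = inf {f(x) + g(Ax)}`. -/
noncomputable def vPrimal {n m : ℕ} (f : Euc n → EReal) (g : Euc m → EReal)
    (A : Euc n →L[ℝ] Euc m) : EReal := ⨅ x, f x + g (A x)

/-- The optimal value of the dual problem `v(D) = -inf θ`. -/
noncomputable def vDual {n m : ℕ} (f : Euc n → EReal) (g : Euc m → EReal)
    (A : Euc n →L[ℝ] Euc m) : ℝ := -(⨅ p, theta f g A p)

-- D bounds
lemma dsup_bddAbove {k : ℕ} {f : Euc k → EReal}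
    (hb : Bornology.IsBounded {x | f x ≠ ⊤}) :
    BddAbove ((fun x : Euc k => ‖x‖ ^ 2 / 2) '' {x | f x ≠ ⊤}) := by
  obtain ⟨R, hR⟩ := hb.exists_norm_le
  refine ⟨R ^ 2 / 2, ?_⟩
  rintro v ⟨x, hx, rfl⟩
  have h1 := hR x hx
  have h0 : (0:ℝ) ≤ ‖x‖ := norm_nonneg x
  nlinarith

lemma le_Dsup {k : ℕ} {f : Euc k → EReal}
    (hb : Bornology.IsBounded {x | f x ≠ ⊤}) {x : Euc k} (hx : f x ≠ ⊤) :
    ‖x‖ ^ 2 / 2 ≤ Dsup f :=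
  le_csSup (dsup_bddAbove hb) ⟨x, hx, rfl⟩

lemma Dsup_nonneg {k : ℕ} {f : Euc k → EReal} (hp : IsProperFn f)
    (hb : Bornology.IsBounded {x | f x ≠ ⊤}) : 0 ≤ Dsup f := by
  obtain ⟨z, hz⟩ := hp.2
  exact le_trans (by positivity) (le_Dsup hb hz)

-- main prox lemma
lemma prox_key {k : ℕ} {f : Euc k → EReal} (hp : IsProperFn f)
    (hb : Bornology.IsBounded {x | f x ≠ ⊤}) {r : ℝ} (hr : 0 < r) (q x0 : Euc k)
    (hmin : ∀ x, proxObj f r (r⁻¹ • q) x0 ≤ proxObj f r (r⁻¹ • q) x) :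
    ∃ a : ℝ, f x0 = (a : EReal) ∧ conjE f q ≠ ⊤ ∧ conjE f q ≠ ⊥ ∧
      conjFn f q ≤ ⟪q, x0⟫ - a + r * Dsup f := by
  obtain ⟨z, hz⟩ := hp.2
  obtain ⟨c, hc⟩ : ∃ c : ℝ, f z = (c : EReal) :=
    ⟨(f z).toReal, (EReal.coe_toReal hz (hp.1 z)).symm⟩
  -- f x0 is finite
  have hx0top : f x0 ≠ ⊤ := by
    intro htop
    have := hmin z
    rw [proxObj, proxObj, htop, hc, EReal.top_add_coe] at this
    exact absurd this (by
      rw [← EReal.coe_add]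
      exact not_le.mpr (EReal.coe_lt_top _))
  obtain ⟨a, ha⟩ : ∃ a : ℝ, f x0 = (a : EReal) :=
    ⟨(f x0).toReal, (EReal.coe_toReal hx0top (hp.1 x0)).symm⟩
  refine ⟨a, ha, ?_⟩
  set u : Euc k := r⁻¹ • q with hu
  have hqu : ∀ w : Euc k, r * ⟪u, w⟫ = ⟪q, w⟫ := by
    intro w
    rw [hu, real_inner_smul_left]
    field_simp
  -- pointwise bound
  have key : ∀ z' : Euc k, ((⟪q, z'⟫ : ℝ) : EReal) - f z'
      ≤ ((⟪q, x0⟫ - a + r * Dsup f : ℝ) : EReal) := by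
    intro z'
    by_cases hz' : f z' = ⊤
    · rw [hz']
      simp
    · obtain ⟨c', hc'⟩ : ∃ c' : ℝ, f z' = (c' : EReal) :=
        ⟨(f z').toReal, (EReal.coe_toReal hz' (hp.1 z')).symm⟩
      rw [hc']
      have hmz := hmin z'
      rw [proxObj, proxObj, ha, hc', ← EReal.coe_add, ← EReal.coe_add,
        EReal.coe_le_coe_iff] at hmz
      have hD : ‖z'‖ ^ 2 / 2 ≤ Dsup f := le_Dsup hb (by rw [hc']; exact EReal.coe_ne_top c')
      have e1 : ‖u - x0‖ ^ 2 = ‖u‖ ^ 2 - 2 * ⟪u, x0⟫ + ‖x0‖ ^ 2 := norm_sub_sq_real u x0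
      have e2 : ‖u - z'‖ ^ 2 = ‖u‖ ^ 2 - 2 * ⟪u, z'⟫ + ‖z'‖ ^ 2 := norm_sub_sq_real u z'
      have hq1 := hqu x0
      have hq2 := hqu z'
      have hx0n : (0:ℝ) ≤ ‖x0‖ ^ 2 := by positivity
      rw [← EReal.coe_sub, EReal.coe_le_coe_iff]
      nlinarith
  have hle : conjE f q ≤ ((⟪q, x0⟫ - a + r * Dsup f : ℝ) : EReal) := iSup_le key
  have hge : (((⟪q, x0⟫ : ℝ) - a : ℝ) : EReal) ≤ conjE f q := by
    have := le_iSup (fun x => ((⟪q, x⟫ : ℝ) : EReal) - f x) x0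
    rw [ha, ← EReal.coe_sub] at this
    exact this
  refine ⟨ne_top_of_le_ne_top (EReal.coe_ne_top _) hle, ?_, ?_⟩
  · exact fun hbot => by rw [hbot, le_bot_iff] at hge; exact EReal.coe_ne_bot _ hge
  · have : conjFn f q = (conjE f q).toReal := rfl
    rw [this]
    calc (conjE f q).toReal ≤ ((((⟪q, x0⟫ - a + r * Dsup f : ℝ)) : EReal)).toReal :=
          EReal.toReal_le_toReal hle (fun hbot => by rw [hbot, le_bot_iff] at hge; exact EReal.coe_ne_bot _ hge) (EReal.coe_ne_top _)
      _ = ⟪q, x0⟫ - a + r * Dsup f := EReal.toReal_coe _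

-- lower bound for conjugate
lemma conj_ge {k : ℕ} {f : Euc k → EReal} {q z : Euc k} {c : ℝ}
    (hc : f z = (c : EReal)) (htop : conjE f q ≠ ⊤) :
    ⟪q, z⟫ - c ≤ conjFn f q := by
  have hge : (((⟪q, z⟫ : ℝ) - c : ℝ) : EReal) ≤ conjE f q := by
    have := le_iSup (fun x => ((⟪q, x⟫ : ℝ) : EReal) - f x) z
    rw [hc, ← EReal.coe_sub] at this
    exact this
  have hbot : conjE f q ≠ ⊥ := fun hbot => by rw [hbot, le_bot_iff] at hge; exact EReal.coe_ne_bot _ hge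
  have : conjFn f q = (conjE f q).toReal := rfl
  rw [this]
  have := EReal.toReal_le_toReal hge (EReal.coe_ne_bot _) htop
  rwa [EReal.toReal_coe] at this

lemma weak_duality {n m : ℕ} (f : Euc n → EReal) (g : Euc m → EReal)
    (A : Euc n →L[ℝ] Euc m) (hpf : IsProperFn f) (hpg : IsProperFn g)
    (hfeas : ∃ x, f x ≠ ⊤ ∧ g (A x) ≠ ⊤)
    (hcf : ∀ p : Euc m, conjE f (ContinuousLinearMap.adjoint A p) ≠ ⊤)
    (hcg : ∀ p : Euc m, conjE g (-p) ≠ ⊤) :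
    vDual f g A ≤ (vPrimal f g A).toReal := by
  -- vPrimal is not ⊤
  obtain ⟨xb, hxb1, hxb2⟩ := hfeas
  have hPtop : vPrimal f g A ≠ ⊤ := by
    intro htop
    have hle : vPrimal f g A ≤ f xb + g (A xb) := iInf_le _ xb
    rw [htop, top_le_iff] at hle
    obtain ⟨c, hc⟩ : ∃ c : ℝ, f xb = (c : EReal) :=
      ⟨(f xb).toReal, (EReal.coe_toReal hxb1 (hpf.1 xb)).symm⟩
    obtain ⟨d, hd⟩ : ∃ d : ℝ, g (A xb) = (d : EReal) :=
      ⟨(g (A xb)).toReal, (EReal.coe_toReal hxb2 (hpg.1 (A xb))).symm⟩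
    rw [hc, hd, ← EReal.coe_add] at hle
    exact EReal.coe_ne_top _ hle
  -- for each p, -(theta p) ≤ vPrimal
  have hkey : ∀ p : Euc m, ((-(theta f g A p) : ℝ) : EReal) ≤ vPrimal f g A := by
    intro p
    refine le_iInf fun x => ?_
    by_cases hfx : f x = ⊤
    · rw [hfx, EReal.top_add_of_ne_bot (hpg.1 (A x))]; exact le_top
    by_cases hgx : g (A x) = ⊤
    · rw [hgx, EReal.add_top_of_ne_bot (hpf.1 x)]; exact le_top
    obtain ⟨c, hc⟩ : ∃ c : ℝ, f x = (c : EReal) :=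
      ⟨(f x).toReal, (EReal.coe_toReal hfx (hpf.1 x)).symm⟩
    obtain ⟨d, hd⟩ : ∃ d : ℝ, g (A x) = (d : EReal) :=
      ⟨(g (A x)).toReal, (EReal.coe_toReal hgx (hpg.1 (A x))).symm⟩
    have h1 : ⟪ContinuousLinearMap.adjoint A p, x⟫ - c ≤
        conjFn f (ContinuousLinearMap.adjoint A p) := conj_ge hc (hcf p)
    have h2 : ⟪-p, A x⟫ - d ≤ conjFn g (-p) := conj_ge hd (hcg p)
    have hadj : ⟪ContinuousLinearMap.adjoint A p, x⟫ = ⟪p, A x⟫ :=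
      ContinuousLinearMap.adjoint_inner_left A x p
    have hneg : ⟪-p, A x⟫ = -⟪p, A x⟫ := inner_neg_left _ _
    have : -(theta f g A p) ≤ c + d := by
      have := add_le_add h1 h2
      rw [hadj, hneg] at this
      unfold theta
      linarith
    rw [hc, hd, ← EReal.coe_add]
    exact EReal.coe_le_coe_iff.mpr this
  have hPbot : vPrimal f g A ≠ ⊥ := by
    intro hbot
    have := hkey 0
    rw [hbot, le_bot_iff] at this
    exact EReal.coe_ne_bot _ this
  have hcoe : ((vPrimal f g A).toReal : EReal) = vPrimal f g A :=
    EReal.coe_toReal hPtop hPbot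
  have hreal : ∀ p : Euc m, -(vPrimal f g A).toReal ≤ theta f g A p := by
    intro p
    have := hkey p
    rw [← hcoe, EReal.coe_le_coe_iff] at this
    linarith
  have : -(vPrimal f g A).toReal ≤ ⨅ p, theta f g A p := le_ciInf hreal
  unfold vDual
  linarith

/-- Primal accuracy estimate: `f(x_{ρ,p}) + g(x_{μ,p}) - v(P)
  ≤ |⟨p, ∇θ_{ρ,μ}(p)⟩| + |θ(p) + v(D)| + 2ρ D_f + 2μ D_g`. -/
theorem stmt7 (n m : ℕ) (f : Euc n → EReal) (g : Euc m → EReal)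
    (A : Euc n →L[ℝ] Euc m) (hf : NiceFn f) (hg : NiceFn g)
    (hfeas : ∃ x, f x ≠ ⊤ ∧ g (A x) ≠ ⊤)
    (ρ μ : ℝ) (hρ : 0 < ρ) (hμ : 0 < μ)
    (xρ : Euc m → Euc n) (xμ : Euc m → Euc m)
    (hxρ : ∀ p : Euc m,
      UniqMin (proxObj f ρ (ρ⁻¹ • (ContinuousLinearMap.adjoint A p))) (xρ p))
    (hxμ : ∀ p : Euc m, UniqMin (proxObj g μ (-(μ⁻¹ • p))) (xμ p)) :
    ∀ p : Euc m, ∃ a b : ℝ, f (xρ p) = (a : EReal) ∧ g (xμ p) = (b : EReal) ∧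
      a + b - (vPrimal f g A).toReal
        ≤ |⟪p, A (xρ p) - xμ p⟫| + |theta f g A p + vDual f g A|
          + 2 * ρ * Dsup f + 2 * μ * Dsup g := by
  have hfp := hf.1
  have hfb := hf.2.2.2
  have hgp := hg.1
  have hgb := hg.2.2.2
  have hgmin : ∀ p' : Euc m, ∀ x, proxObj g μ (μ⁻¹ • (-p')) (xμ p') ≤ proxObj g μ (μ⁻¹ • (-p')) x := by
    intro p' x
    have h := (hxμ p').1 x
    rw [smul_neg]
    exact h
  have hcf : ∀ p' : Euc m, conjE f (ContinuousLinearMap.adjoint A p') ≠ ⊤ := by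
    intro p'
    obtain ⟨a, -, h, -⟩ := prox_key hfp hfb hρ (ContinuousLinearMap.adjoint A p') (xρ p') (hxρ p').1
    exact h
  have hcg : ∀ p' : Euc m, conjE g (-p') ≠ ⊤ := by
    intro p'
    obtain ⟨b, -, h, -⟩ := prox_key hgp hgb hμ (-p') (xμ p') (hgmin p')
    exact h
  have hwd : vDual f g A ≤ (vPrimal f g A).toReal :=
    weak_duality f g A hfp hgp hfeas hcf hcg
  have hDf : 0 ≤ Dsup f := Dsup_nonneg hfp hfb
  have hDg : 0 ≤ Dsup g := Dsup_nonneg hgp hgb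
  intro p
  obtain ⟨a, ha, -, -, haf⟩ := prox_key hfp hfb hρ (ContinuousLinearMap.adjoint A p) (xρ p) (hxρ p).1
  obtain ⟨b, hb, -, -, hbg⟩ := prox_key hgp hgb hμ (-p) (xμ p) (hgmin p)
  refine ⟨a, b, ha, hb, ?_⟩
  have hadj : ⟪ContinuousLinearMap.adjoint A p, xρ p⟫ = ⟪p, A (xρ p)⟫ :=
    ContinuousLinearMap.adjoint_inner_left A (xρ p) p
  have hneg : ⟪-p, xμ p⟫ = -⟪p, xμ p⟫ := inner_neg_left _ _
  have hsub : ⟪p, A (xρ p) - xμ p⟫ = ⟪p, A (xρ p)⟫ - ⟪p, xμ p⟫ := inner_sub_right _ _ _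
  have hθ : theta f g A p ≤ ⟪p, A (xρ p) - xμ p⟫ - a - b + ρ * Dsup f + μ * Dsup g := by
    unfold theta
    rw [hsub]
    rw [hadj] at haf
    rw [hneg] at hbg
    linarith
  have habs1 : ⟪p, A (xρ p) - xμ p⟫ ≤ |⟪p, A (xρ p) - xμ p⟫| := le_abs_self _
  have habs2 : -(theta f g A p) - vDual f g A ≤ |theta f g A p + vDual f g A| := by
    calc -(theta f g A p) - vDual f g A = -(theta f g A p + vDual f g A) := by ring
      _ ≤ |theta f g A p + vDual f g A| := neg_le_abs _
  have h5 : 0 ≤ ρ * Dsup f := mul_nonneg hρ.le hDf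
  have h6 : 0 ≤ μ * Dsup g := mul_nonneg hμ.le hDg
  linarith
end
end

section
/- For all ρ > 0, μ > 0, κ > 0, if p* is an optimal solution of the dual problem (a minimizer of θ over ℝ^m) and p_DS* is the unique minimizer of θ_{ρ,μ,κ}, then for every p ∈ ℝ^m it holds θ(p) − θ(p*) ≤ ρ D_f + μ D_g + (κ/2)‖p*‖² + (θ_{ρ,μ}(p) − θ_{ρ,μ}(p_DS*)). -/
open scoped RealInnerProductSpace
noncomputable section

/-!
Smoothing a conjugate changes it by at most the size of the domain: for `x ∈ dom f`,
`⟨q,x⟩ - f x - (r/2)‖x‖²` lies between `⟨q,x⟩ - f x - r D_f` and `⟨q,x⟩ - f x`, so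
`f_r* ≤ f* ≤ f_r* + r D_f`. Hence `θ(p) ≤ θ_{ρ,μ}(p) + ρ D_f + μ D_g` and `θ_{ρ,μ}(p*) ≤ θ(p*)`,
while minimality of `p_DS*` for `θ_{ρ,μ,κ}` gives
`θ_{ρ,μ}(p_DS*) ≤ θ_{ρ,μ,κ}(p_DS*) ≤ θ_{ρ,μ,κ}(p*) = θ_{ρ,μ}(p*) + (κ/2)‖p*‖²`.
-/

theorem LowerSemicontinuous.exists_forall_le_of_isBounded {E β : Type*} [PseudoMetricSpace E]
    [ProperSpace E] [LinearOrder β] [OrderTop β] [TopologicalSpace β] {f : E → β}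
    (hf : LowerSemicontinuous f) (hbdd : Bornology.IsBounded {x | f x ≠ ⊤})
    (hne : ∃ x, f x ≠ ⊤) : ∃ x₀, ∀ x, f x₀ ≤ f x := by
  obtain ⟨x₁, hx₁⟩ := hne
  obtain ⟨x₀, -, hmin⟩ := LowerSemicontinuousOn.exists_isMinOn
    ⟨x₁, subset_closure (s := {x | f x ≠ ⊤}) hx₁⟩ hbdd.isCompact_closure
    (hf.lowerSemicontinuousOn _)
  refine ⟨x₀, fun x => ?_⟩
  by_cases hx : f x = ⊤
  · exact hx ▸ le_top
  · exact hmin (subset_closure hx)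

theorem IsProperFn.exists_forall_coe_le {k : ℕ} {f : Euc k → EReal} (hf : IsProperFn f)
    (hlsc : LowerSemicontinuous f) (hbdd : Bornology.IsBounded {x | f x ≠ ⊤}) :
    ∃ b : ℝ, ∀ x, (b : EReal) ≤ f x := by
  obtain ⟨x₀, hx₀⟩ := hlsc.exists_forall_le_of_isBounded hbdd hf.2
  exact ⟨(f x₀).toReal, fun x => (EReal.coe_toReal_le (hf.1 x₀)).trans (hx₀ x)⟩

theorem Bornology.IsBounded.exists_inner_le {E : Type*} [SeminormedAddCommGroup E]
    [InnerProductSpace ℝ E] {s : Set E} (hs : Bornology.IsBounded s) (q : E) :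
    ∃ C, ∀ x ∈ s, ⟪q, x⟫ ≤ C := by
  obtain ⟨R, hR⟩ := hs.exists_norm_le
  exact ⟨‖q‖ * R, fun x hx =>
    (real_inner_le_norm q x).trans (mul_le_mul_of_nonneg_left (hR x hx) (norm_nonneg q))⟩

theorem norm_sq_div_two_le_Dsup {k : ℕ} {f : Euc k → EReal}
    (hbdd : Bornology.IsBounded {x | f x ≠ ⊤}) {x : Euc k} (hx : f x ≠ ⊤) :
    ‖x‖ ^ 2 / 2 ≤ Dsup f := by
  obtain ⟨R, hR⟩ := hbdd.exists_norm_le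
  refine le_csSup ⟨R ^ 2 / 2, ?_⟩ ⟨x, hx, rfl⟩
  rintro _ ⟨y, hy, rfl⟩
  have := pow_le_pow_left₀ (norm_nonneg y) (hR y hy) 2
  linarith

section iSupCoeSub

variable {E : Type*} {f : E → EReal}

theorem iSup_coe_sub_ne_bot (φ : E → ℝ) {x₀ : E} (hbot : f x₀ ≠ ⊥) (htop : f x₀ ≠ ⊤) :
    (⨆ x, (φ x : EReal) - f x) ≠ ⊥ := by
  refine ne_bot_of_le_ne_bot ?_ (le_iSup (fun x => (φ x : EReal) - f x) x₀)
  rw [← EReal.coe_toReal htop hbot]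
  exact EReal.coe_ne_bot _

/-- The hypotheses make both suprema finite, so `toReal` loses nothing. -/
theorem toReal_iSup_coe_sub_le {φ ψ : E → ℝ} {b C c : ℝ} {x₀ : E}
    (hb : ∀ x, (b : EReal) ≤ f x) (hx₀ : f x₀ ≠ ⊤) (hψ : ∀ x, f x ≠ ⊤ → ψ x ≤ C)
    (hφψ : ∀ x, f x ≠ ⊤ → φ x ≤ ψ x + c) :
    (⨆ x, (φ x : EReal) - f x).toReal ≤ (⨆ x, (ψ x : EReal) - f x).toReal + c := by
  have hbot : ∀ x, f x ≠ ⊥ := fun x => ne_bot_of_le_ne_bot (EReal.coe_ne_bot b) (hb x)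
  set Sψ := ⨆ x, (ψ x : EReal) - f x
  have hcoe : ∀ x, f x ≠ ⊤ → ((f x).toReal : EReal) = f x := fun x hx =>
    EReal.coe_toReal hx (hbot x)
  have hSψ_top : Sψ ≠ ⊤ := by
    refine ne_top_of_le_ne_top (EReal.coe_ne_top (C - b)) (iSup_le fun x => ?_)
    by_cases hx : f x = ⊤
    · simp [hx]
    · rw [← hcoe x hx, ← EReal.coe_sub, EReal.coe_le_coe_iff]
      have := hb x
      rw [← hcoe x hx, EReal.coe_le_coe_iff] at this
      linarith [hψ x hx]
  have hSφ : (⨆ x, (φ x : EReal) - f x) ≤ ((Sψ.toReal + c : ℝ) : EReal) := by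
    refine iSup_le fun x => ?_
    by_cases hx : f x = ⊤
    · simp [hx]
    · have hψx : ((ψ x - (f x).toReal : ℝ) : EReal) ≤ Sψ := by
        rw [EReal.coe_sub, hcoe x hx]
        exact le_iSup (fun x => (ψ x : EReal) - f x) x
      have := EReal.toReal_le_toReal hψx (EReal.coe_ne_bot _) hSψ_top
      rw [EReal.toReal_coe] at this
      rw [← hcoe x hx, ← EReal.coe_sub, EReal.coe_le_coe_iff]
      linarith [hφψ x hx]
  have := EReal.toReal_le_toReal hSφ (iSup_coe_sub_ne_bot φ (hbot x₀) hx₀) (EReal.coe_ne_top _)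
  rwa [EReal.toReal_coe] at this

end iSupCoeSub

section Conjugate

variable {k : ℕ} {f : Euc k → EReal}

theorem conjSm_le_conjFn (hf : IsProperFn f) (hlsc : LowerSemicontinuous f)
    (hbdd : Bornology.IsBounded {x | f x ≠ ⊤}) {r : ℝ} (hr : 0 ≤ r) (q : Euc k) :
    conjSm f r q ≤ conjFn f q := by
  obtain ⟨b, hb⟩ := hf.exists_forall_coe_le hlsc hbdd
  obtain ⟨C, hC⟩ := hbdd.exists_inner_le q
  unfold conjSm conjFn
  exact le_of_le_of_eq (toReal_iSup_coe_sub_le hb hf.2.choose_spec hC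
    fun x _ => by nlinarith [sq_nonneg ‖x‖]) (add_zero _)

theorem conjFn_le_conjSm_add (hf : IsProperFn f) (hlsc : LowerSemicontinuous f)
    (hbdd : Bornology.IsBounded {x | f x ≠ ⊤}) {r : ℝ} (hr : 0 ≤ r) (q : Euc k) :
    conjFn f q ≤ conjSm f r q + r * Dsup f := by
  obtain ⟨b, hb⟩ := hf.exists_forall_coe_le hlsc hbdd
  obtain ⟨C, hC⟩ := hbdd.exists_inner_le q
  unfold conjFn conjSm
  refine toReal_iSup_coe_sub_le (ψ := fun x => ⟪q, x⟫ - r / 2 * ‖x‖ ^ 2) (C := C) hb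
    hf.2.choose_spec (fun x hx => by nlinarith [hC x hx, sq_nonneg ‖x‖]) fun x hx => ?_
  have := mul_le_mul_of_nonneg_left (norm_sq_div_two_le_Dsup hbdd hx) hr
  linarith

end Conjugate

theorem stmt11_general (n m : ℕ) (f : Euc n → EReal) (g : Euc m → EReal)
    (A : Euc n →L[ℝ] Euc m) (hf : NiceFn f) (hg : NiceFn g)
    (ρ μ κ : ℝ) (hρ : 0 < ρ) (hμ : 0 < μ) (hκ : 0 < κ)
    (pstar : Euc m)
    (pDS : Euc m) (hpDS : UniqMin (thetaSmK f g A ρ μ κ) pDS) :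
    ∀ p : Euc m,
      theta f g A p - theta f g A pstar
        ≤ ρ * Dsup f + μ * Dsup g + κ / 2 * ‖pstar‖ ^ 2
          + (thetaSm f g A ρ μ p - thetaSm f g A ρ μ pDS) := by
  intro p
  obtain ⟨hf, -, hflsc, hfbdd⟩ := hf
  obtain ⟨hg, -, hglsc, hgbdd⟩ := hg
  have h_smooth_p : theta f g A p ≤ thetaSm f g A ρ μ p + (ρ * Dsup f + μ * Dsup g) := by
    have := conjFn_le_conjSm_add hf hflsc hfbdd hρ.le (ContinuousLinearMap.adjoint A p)
    have := conjFn_le_conjSm_add hg hglsc hgbdd hμ.le (-p)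
    unfold theta thetaSm
    linarith
  have h_smooth_pstar : thetaSm f g A ρ μ pstar ≤ theta f g A pstar := by
    have := conjSm_le_conjFn hf hflsc hfbdd hρ.le (ContinuousLinearMap.adjoint A pstar)
    have := conjSm_le_conjFn hg hglsc hgbdd hμ.le (-pstar)
    unfold theta thetaSm
    linarith
  have h_min : thetaSm f g A ρ μ pDS ≤ thetaSm f g A ρ μ pstar + κ / 2 * ‖pstar‖ ^ 2 := by
    have := hpDS.1 pstar
    have hpen : 0 ≤ κ / 2 * ‖pDS‖ ^ 2 := by positivity
    unfold thetaSmK at this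
    linarith
  linarith

/-- For every `p`: `θ(p) - θ(p*) ≤ ρ D_f + μ D_g + (κ/2)‖p*‖² + (θ_{ρ,μ}(p) - θ_{ρ,μ}(p_DS*))`. -/
theorem stmt11 (n m : ℕ) (f : Euc n → EReal) (g : Euc m → EReal)
    (A : Euc n →L[ℝ] Euc m) (hf : NiceFn f) (hg : NiceFn g)
    (ρ μ κ : ℝ) (hρ : 0 < ρ) (hμ : 0 < μ) (hκ : 0 < κ)
    (pstar : Euc m) (hpstar : ∀ p, theta f g A pstar ≤ theta f g A p)
    (pDS : Euc m) (hpDS : UniqMin (thetaSmK f g A ρ μ κ) pDS) :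
    ∀ p : Euc m,
      theta f g A p - theta f g A pstar
        ≤ ρ * Dsup f + μ * Dsup g + κ / 2 * ‖pstar‖ ^ 2
          + (thetaSm f g A ρ μ p - thetaSm f g A ρ μ pDS) :=
  stmt11_general n m f g A hf hg ρ μ κ hρ hμ hκ pstar pDS hpDS
end
end
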